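/- arXiv:2209.06891 — 2 statements merged into one kernel-verified Lean document; each statement's English description precedes it below -/
import Mathlib

section
/- Let k ≥ 8 be an integer and let r_1, ..., r_{k+1} be nonnegative integers with sum k + δ for some integer δ ≥ 0. Write δ = n(k+1) + i with n ≥ 0 and 0 ≤ i ≤ k. Let σ be a permutation of {1, ..., k+1} with r_{σ(1)} ≤ ... ≤ r_{σ(k+1)}. If r_{σ(k)} ≤ n, then 1 + ⌊3(n+1)/2⌋ ≤ r_{σ(k)} + ⌊(r_{σ(k+1)} − 1)/2⌋. -/
/-!
Since the `k` smallest values are at most `m = r (σ (k - 1))`, the largest value `L` satisfies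
`L ≥ k + n + k (n - m)`. With `k ≥ 8` this gives `(L - 1) / 2 ≥ (n + 7) / 2 + 4 (n - m)`,
which more than compensates for the gap between `m` and `n`.
-/

open Finset

theorem Monotone.sum_le_nsmul_penultimate_add_last {M : Type*} [AddCommMonoid M] [PartialOrder M]
    [IsOrderedAddMonoid M] {k : ℕ} {f : Fin (k + 1) → M} (hf : Monotone f)
    (hk : k - 1 < k + 1) :
    ∑ j, f j ≤ k • f ⟨k - 1, hk⟩ + f (Fin.last k) := by
  rw [Fin.sum_univ_castSucc]
  gcongr
  calc ∑ j : Fin k, f j.castSucc ≤ ∑ _j : Fin k, f ⟨k - 1, hk⟩ :=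
        sum_le_sum fun j _ => hf (Fin.mk_le_mk.mpr (by omega))
    _ = k • f ⟨k - 1, hk⟩ := by simp

theorem one_add_three_mul_succ_div_two_le {k m n L : ℕ} (hk : 8 ≤ k) (hm : m ≤ n)
    (hL : k + n * (k + 1) ≤ k * m + L) :
    1 + 3 * (n + 1) / 2 ≤ m + (L - 1) / 2 := by
  obtain ⟨d, rfl⟩ := Nat.exists_eq_add_of_le hm
  have hkd : 8 * d ≤ k * d := Nat.mul_le_mul_right d hk
  have hexpand : (m + d) * (k + 1) = k * m + k * d + m + d := by ring
  omega

theorem arithmetic_case_two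
    (k : ℕ) (hk : 8 ≤ k) (r : Fin (k + 1) → ℕ) (δ n i : ℕ)
    (hsum : ∑ j, r j = k + δ)
    (hni : δ = n * (k + 1) + i)
    (σ : Equiv.Perm (Fin (k + 1)))
    (hσ : Monotone fun j => r (σ j))
    (h : r (σ ⟨k - 1, by omega⟩) ≤ n) :
    1 + 3 * (n + 1) / 2 ≤ r (σ ⟨k - 1, by omega⟩) + (r (σ (Fin.last k)) - 1) / 2 := by
  have hsorted : ∑ j, r j ≤ k * r (σ ⟨k - 1, by omega⟩) + r (σ (Fin.last k)) := by
    rw [← Equiv.sum_comp σ r, ← smul_eq_mul]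
    exact hσ.sum_le_nsmul_penultimate_add_last _
  exact one_add_three_mul_succ_div_two_le hk h (by omega)
end

section
/- Let w be a finite word over the alphabet {a,b} of the form w = a^{r_1} b a^{r_2} b ... a^{r_k} b a^{r_{k+1}}, where r_1, ..., r_{k+1} are nonnegative integers, with |w|_a ≥ |w|_b = k ≥ 10. Let δ = |w|_a − k, and write δ = n(k+1) + i with n ≥ 0 and 0 ≤ i ≤ k. Let σ be a permutation of {1, ..., k+1} with r_{σ(1)} ≤ ... ≤ r_{σ(k+1)}. If r_{σ(k)} = n + 1 and r_{σ(k+1)} ≤ n + 3, then s(w) + 1 + ⌊3n/2 + 3i/(2(k+1))⌋ ≤ m(w) + r_{σ(k)}. -/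
/-! Call `a := false`. Because `r (σ (k-1)) = n + 1` the word contains the factor `a^(n+1)`, so the
odd powers `a^3, a^5, …, a^(2⌊n/2⌋+1)` are `⌊n/2⌋` factors counted by `m(w)` but, having odd length,
not by `s(w)`. On the other side all blocks but the largest are at most `n + 1` long and the largest at
most `n + 3`, so `k + n(k+1) + i = |w|_a ≤ (k+1)(n+1) + 2`, i.e. `i ≤ 3`. As `k ≥ 10`, the fractional
term `3i/(2(k+1))` is below `1/2`, and `⌊3n/2 + 3i/(2(k+1))⌋ ≤ n + ⌊n/2⌋`. -/

/-- `numPowers w` is the number of distinct nonempty factors of `w` that are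
powers of exponent at least 2, i.e. of the form `u^j` with `u` nonempty and `j ≥ 2`. -/
noncomputable def numPowers {α : Type*} (w : List α) : ℕ :=
  Set.ncard {v : List α | v <:+: w ∧
    ∃ u : List α, u ≠ [] ∧ ∃ j : ℕ, 2 ≤ j ∧ v = (List.replicate j u).flatten}

/-- `numSquares w` is the number of distinct squares occurring as factors of `w`. -/
noncomputable def numSquares {α : Type*} (w : List α) : ℕ :=
  Set.ncard {v : List α | v <:+: w ∧ ∃ u : List α, u ≠ [] ∧ v = u ++ u}

/-- The binary word `a^{r 0} b a^{r 1} b ⋯ a^{r (k-1)} b a^{r k}` over the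
alphabet `Bool`, where `a := false` and `b := true`. -/
def binWord (k : ℕ) (r : Fin (k + 1) → ℕ) : List Bool :=
  (List.ofFn (fun j : Fin k => List.replicate (r j.castSucc) false ++ [true])).flatten
    ++ List.replicate (r (Fin.last k)) false

theorem List.finite_setOf_isInfix {α : Type*} (w : List α) : {v | v <:+: w}.Finite :=
  w.sublists.finite_toSet.subset fun _ hv => List.mem_sublists.mpr hv.sublist

theorem numSquares_add_le_numPowers_of_replicate_isInfix {α : Type*} {w : List α} {a : α} {N : ℕ}
    (h : List.replicate N a <:+: w) : numSquares w + (N - 1) / 2 ≤ numPowers w := by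
  set S := {v | v <:+: w ∧ ∃ u : List α, u ≠ [] ∧ v = u ++ u}
  set P := {v | v <:+: w ∧ ∃ u : List α, u ≠ [] ∧ ∃ j : ℕ, 2 ≤ j ∧ v = (List.replicate j u).flatten}
  set T := (fun j => List.replicate (2 * j + 1) a) '' Set.Icc 1 ((N - 1) / 2)
  have hPfin : P.Finite := w.finite_setOf_isInfix.subset fun _ hv => hv.1
  have hSP : S ⊆ P := by
    rintro v ⟨hv, u, hu, rfl⟩
    exact ⟨hv, u, hu, 2, le_rfl, by simp [List.replicate_succ]⟩
  have hTP : T ⊆ P := by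
    rintro v ⟨j, ⟨hj1, hj2⟩, rfl⟩
    refine ⟨(List.infix_replicate_iff.mpr ⟨?_, by simp⟩).trans h, [a], by simp, 2 * j + 1,
      by omega, by simp⟩
    simp only [List.length_replicate]
    omega
  have hST : Disjoint S T := by
    rw [Set.disjoint_left]
    rintro v ⟨_, u, -, rfl⟩ ⟨j, -, hv⟩
    have := congrArg List.length hv
    simp only [List.length_replicate, List.length_append] at this
    omega
  have hTcard : T.ncard = (N - 1) / 2 := by
    rw [Set.ncard_image_of_injective _ fun j j' hj => by
      simpa using congrArg List.length hj, ← Finset.coe_Icc, Set.ncard_coe_finset, Nat.card_Icc]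
    omega
  calc numSquares w + (N - 1) / 2 = (S ∪ T).ncard := by
        rw [← hTcard, Set.ncard_union_eq hST (hPfin.subset hSP) (hPfin.subset hTP)]
        rfl
    _ ≤ numPowers w := Set.ncard_le_ncard (Set.union_subset hSP hTP) hPfin

theorem count_false_binWord (k : ℕ) (r : Fin (k + 1) → ℕ) :
    (binWord k r).count false = ∑ j, r j := by
  rw [Fin.sum_univ_castSucc]
  simp [binWord, List.count_flatten, Function.comp_def, List.count_append, List.sum_ofFn]

theorem replicate_isInfix_binWord (k : ℕ) (r : Fin (k + 1) → ℕ) (j : Fin (k + 1)) :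
    List.replicate (r j) false <:+: binWord k r := by
  induction j using Fin.lastCases with
  | last => exact (List.suffix_append _ _).isInfix
  | cast j =>
    have hblock : List.replicate (r j.castSucc) false ++ [true] <:+:
        (List.ofFn fun j : Fin k => List.replicate (r j.castSucc) false ++ [true]).flatten :=
      List.infix_of_mem_flatten (List.mem_ofFn.mpr ⟨j, rfl⟩)
    exact ((List.prefix_append _ _).isInfix.trans hblock).trans (List.prefix_append _ _).isInfix

theorem Fin.sum_le_mul_add_last {k c : ℕ} (f : Fin (k + 1) → ℕ)
    (hc : ∀ j : Fin k, f j.castSucc ≤ c) : ∑ j, f j ≤ k * c + f (Fin.last k) := by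
  rw [Fin.sum_univ_castSucc]
  gcongr
  simpa using Finset.sum_le_sum fun j (_ : j ∈ Finset.univ) => hc j

theorem Int.floor_three_mul_div_two_add_le (n : ℕ) {ε : ℚ} (hε : ε < 1 / 2) :
    ⌊3 * (n : ℚ) / 2 + ε⌋ ≤ n + (n / 2 : ℕ) := by
  rw [Int.floor_le_iff, Int.cast_add, Int.cast_natCast, Int.cast_natCast]
  have : (n : ℚ) ≤ 2 * (n / 2 : ℕ) + 1 := by exact_mod_cast (by omega : n ≤ 2 * (n / 2) + 1)
  linarith

theorem case_four_bound
    (k : ℕ) (hk : 10 ≤ k) (r : Fin (k + 1) → ℕ) (δ n i : ℕ)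
    (hδ : (binWord k r).count false = k + δ)
    (hni : δ = n * (k + 1) + i)
    (σ : Equiv.Perm (Fin (k + 1)))
    (hσ : Monotone fun j => r (σ j))
    (h1 : r (σ ⟨k - 1, by omega⟩) = n + 1)
    (h2 : r (σ (Fin.last k)) ≤ n + 3) :
    (numSquares (binWord k r) : ℤ) + 1 +
        ⌊(3 * (n : ℚ) / 2 + 3 * (i : ℚ) / (2 * ((k : ℚ) + 1)))⌋ ≤
      (numPowers (binWord k r) : ℤ) + r (σ ⟨k - 1, by omega⟩) := by
  have hsum : k + δ ≤ k * (n + 1) + (n + 3) := by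
    rw [← hδ, count_false_binWord, ← Equiv.sum_comp σ r]
    have hc (j : Fin k) : r (σ j.castSucc) ≤ n + 1 :=
      h1 ▸ hσ (Fin.le_def.mpr (by simp only [Fin.val_castSucc]; omega))
    exact (Fin.sum_le_mul_add_last _ hc).trans (by omega)
  have hi : i ≤ 3 := by subst hni; nlinarith
  have hε : 3 * (i : ℚ) / (2 * ((k : ℚ) + 1)) < 1 / 2 := by
    rw [div_lt_iff₀ (by positivity)]
    have : (i : ℚ) ≤ 3 := by exact_mod_cast hi
    have : (10 : ℚ) ≤ k := by exact_mod_cast hk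
    linarith
  have hpowers := numSquares_add_le_numPowers_of_replicate_isInfix
    (h1 ▸ replicate_isInfix_binWord k r (σ ⟨k - 1, by omega⟩))
  have hfloor := Int.floor_three_mul_div_two_add_le n hε
  rw [h1]
  simp only [Nat.add_sub_cancel] at hpowers
  omega
end
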